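/- Let X₁,…,X_{k-1}, Z be i.i.d. uniform on [-1,1] and s ∈ (0,1]. Then P(|max(X₁,…,X_{k-1},s)| < |Z|) = (2^k − (1+s)^k)/(k·2^{k-1}). -/

import Mathlib

/-!
Since `s > 0`, the event is `{Xᵢ < |Z| for all i} ∩ {s < |Z|}`. Given `Z = z`, the `Xᵢ` are
independent with `P(Xᵢ < t) = (t + 1)/2`, so the probability is `E[1_{s < |Z|} ((|Z| + 1)/2)^(k-1)]`.
As `|Z|` is uniform on `[0, 1]`, this is `∫_s^1 ((t + 1)/2)^(k-1) dt = 2 (1 - ((1 + s)/2)^k) / k`.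
-/

open MeasureTheory

noncomputable def unif : Measure ℝ :=
  (2 : ENNReal)⁻¹ • (volume.restrict (Set.Icc (-1 : ℝ) 1))

open Set

theorem abs_max_sup'_lt_iff {ι α : Type*} [AddCommGroup α] [LinearOrder α] [IsOrderedAddMonoid α]
    {s : Finset ι} (hs : s.Nonempty) (x : ι → α) {c t : α} (hc : 0 ≤ c) :
    |max (s.sup' hs x) c| < t ↔ (∀ i ∈ s, x i < t) ∧ c < t := by
  rw [abs_of_nonneg (hc.trans (le_max_right _ _)), max_lt_iff, Finset.sup'_lt_iff]

theorem unif_apply {A : Set ℝ} (hA : MeasurableSet A) :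
    unif A = 2⁻¹ * volume (A ∩ Icc (-1) 1) := by
  rw [unif, Measure.smul_apply, smul_eq_mul, Measure.restrict_apply hA]

instance : IsProbabilityMeasure unif :=
  ⟨by
    rw [unif_apply MeasurableSet.univ, univ_inter, Real.volume_Icc]
    norm_num [ENNReal.inv_mul_cancel]⟩

theorem ae_unif_mem_Icc : ∀ᵐ z ∂unif, z ∈ Icc (-1) 1 :=
  Measure.ae_smul_measure (ae_restrict_mem measurableSet_Icc) _

theorem unif_Iio {t : ℝ} (h1 : t ≤ 1) :
    unif (Iio t) = ENNReal.ofReal ((t + 1) / 2) := by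
  have : Iio t ∩ Icc (-1) 1 = Ico (-1) t := by
    ext; simp only [mem_inter_iff, mem_Iio, mem_Icc, mem_Ico]; grind
  rw [unif_apply measurableSet_Iio, this, Real.volume_Ico,
    ENNReal.ofReal_div_of_pos two_pos, ENNReal.ofReal_ofNat, sub_neg_eq_add, ENNReal.div_eq_inv_mul]

theorem pi_unif_forall_lt (ι : Type*) [Fintype ι] {t : ℝ} (h0 : -1 ≤ t) (h1 : t ≤ 1) :
    Measure.pi (fun _ : ι => unif) {x | ∀ i, x i < t} =
      ENNReal.ofReal (((t + 1) / 2) ^ Fintype.card ι) := by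
  have : {x : ι → ℝ | ∀ i, x i < t} = univ.pi fun _ => Iio t := by ext; simp
  rw [this, Measure.pi_pi, Finset.prod_const, Finset.card_univ, unif_Iio h1,
    ENNReal.ofReal_pow (by linarith)]

theorem integral_unif_comp_abs (f : ℝ → ℝ) : ∫ z, f |z| ∂unif = ∫ t in Ioc 0 1, f t := by
  have hIcc : Icc (-1 : ℝ) 1 = abs ⁻¹' Iic 1 := by ext; simp [abs_le]
  calc ∫ z, f |z| ∂unif = 2⁻¹ * ∫ z, (Iic 1).indicator f |z| := by
        rw [unif, integral_smul_measure, ← integral_indicator measurableSet_Icc, hIcc]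
        simp only [ENNReal.toReal_inv, ENNReal.toReal_ofNat, smul_eq_mul, ← indicator_comp_right]
        rfl
    _ = ∫ t in Ioc 0 1, f t := by
        rw [integral_comp_abs, setIntegral_indicator measurableSet_Iic, Ioi_inter_Iic]; ring

theorem integral_half_add_one_pow (n : ℕ) (a b : ℝ) :
    ∫ t in a..b, ((t + 1) / 2) ^ n =
      2 * (((b + 1) / 2) ^ (n + 1) - ((a + 1) / 2) ^ (n + 1)) / (n + 1) := by
  rw [intervalIntegral.integral_comp_add_right (fun u => (u / 2) ^ n),
    intervalIntegral.integral_comp_div (fun u => u ^ n) two_ne_zero, integral_pow, smul_eq_mul]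
  ring

theorem toReal_pi_prod_unif_forall_lt_abs (ι : Type*) [Fintype ι] {s : ℝ} (hs : 0 ≤ s) :
    ((Measure.pi fun _ : ι => unif).prod unif
      {p : (ι → ℝ) × ℝ | (∀ i, p.1 i < |p.2|) ∧ s < |p.2|}).toReal =
      ∫ t in Ioc s 1, ((t + 1) / 2) ^ Fintype.card ι := by
  set E := {p : (ι → ℝ) × ℝ | (∀ i, p.1 i < |p.2|) ∧ s < |p.2|}
  have hE : MeasurableSet E := by
    simp only [E, ofPred_and, ofPred_forall]
    exact (MeasurableSet.iInter fun i => measurableSet_lt (by fun_prop) (by fun_prop)).inter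
      (measurableSet_lt (by fun_prop) (by fun_prop))
  have hslice : ∀ᵐ z ∂unif, ((Measure.pi fun _ : ι => unif) ((fun x => (x, z)) ⁻¹' E)).toReal =
      (Ioi s).indicator (fun t => ((t + 1) / 2) ^ Fintype.card ι) |z| := by
    filter_upwards [ae_unif_mem_Icc] with z hz
    by_cases hsz : s < |z|
    · have : (fun x => (x, z)) ⁻¹' E = {x | ∀ i, x i < |z|} := by ext; simp [E, hsz]
      rw [this, pi_unif_forall_lt ι (by linarith [abs_nonneg z]) (abs_le.2 hz),
        indicator_of_mem (mem_Ioi.2 hsz), ENNReal.toReal_ofReal (by positivity)]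
    · have : (fun x => (x, z)) ⁻¹' E = ∅ := by ext; simp [E, hsz]
      rw [this, indicator_of_notMem (notMem_Ioi.2 (not_lt.1 hsz)), measure_empty,
        ENNReal.toReal_zero]
  rw [Measure.prod_apply_symm hE,
    ← integral_toReal (measurable_measure_prodMk_right hE).aemeasurable
      (ae_of_all _ fun _ => measure_lt_top _ _),
    integral_congr_ae hslice, integral_unif_comp_abs,
    setIntegral_indicator measurableSet_Ioi, Ioc_inter_Ioi, max_eq_right hs]

theorem stmt_10 (k : ℕ) (hk : 2 ≤ k) (s : ℝ) (hs0 : 0 < s) (hs1 : s ≤ 1) :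
    (((Measure.pi fun _ : Fin (k - 1) => unif).prod unif)
        {p : (Fin (k - 1) → ℝ) × ℝ |
          |max (Finset.univ.sup' (Finset.univ_nonempty_iff.2 ⟨⟨0, by omega⟩⟩) p.1) s| < |p.2|}).toReal
      = ((2 : ℝ) ^ k - (1 + s) ^ k) / (k * 2 ^ (k - 1)) := by
  simp_rw [abs_max_sup'_lt_iff _ _ hs0.le, Finset.mem_univ, true_imp_iff]
  rw [toReal_pi_prod_unif_forall_lt_abs _ hs0.le, ← intervalIntegral.integral_of_le hs1,
    integral_half_add_one_pow, Fintype.card_fin]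
  obtain ⟨n, rfl⟩ : ∃ n, k = n + 1 := ⟨k - 1, by omega⟩
  rw [Nat.add_sub_cancel, div_pow, div_pow]
  push_cast
  field_simp
  ring
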